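/- Let p be an odd prime and G a finite p-group. Then for all i ≥ 1, η_i(G/η(G)^p) = η_i(G)/η(G)^p. -/

import Mathlib

/-- The subgroup generated by `p`-th powers of elements of `N`. -/
def pPow {G : Type*} [Group G] (p : ℕ) (N : Subgroup G) : Subgroup G :=
  Subgroup.closure ((fun x => x ^ p) '' (N : Set G))

theorem pPow_normal {G : Type*} [Group G] (p : ℕ) {N : Subgroup G} (hN : N.Normal) :
    (pPow p N).Normal := by
  constructor
  intro x hx g
  have h : pPow p N ≤ Subgroup.comap (MulAut.conj g).toMonoidHom (pPow p N) := by
    rw [pPow, Subgroup.closure_le]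
    rintro - ⟨n, hn, rfl⟩
    have : (MulAut.conj g) (n ^ p) = (g * n * g⁻¹) ^ p := by
      simp [MulAut.conj_apply, conj_pow]
    refine Subgroup.mem_comap.2 ?_
    show (MulAut.conj g) (n ^ p) ∈ _
    rw [this]
    exact Subgroup.subset_closure ⟨g * n * g⁻¹, hN.conj_mem n hn g, rfl⟩
  simpa using h hx

theorem normal_sSup {G : Type*} [Group G] {S : Set (Subgroup G)}
    (hS : ∀ N ∈ S, N.Normal) : (sSup S).Normal := by
  constructor
  intro x hx g
  have h : sSup S ≤ Subgroup.comap (MulAut.conj g).toMonoidHom (sSup S) := by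
    refine sSup_le fun N hN => le_trans ?_ (Subgroup.comap_mono (le_sSup hN))
    intro n hn
    exact Subgroup.mem_comap.2 (by simpa using (hS N hN).conj_mem n hn g)
  simpa using h hx

/-- The upper η-series: `η₀ = 1`, and `η_{i+1}/η_i = η(G/η_i)` is the product of all
powerfully embedded subgroups of `G/η_i`. -/
def etaUp (p : ℕ) (G : Type*) [Group G] : ℕ → Subgroup G
  | 0 => ⊥
  | i + 1 => sSup {N : Subgroup G | N.Normal ∧ ⁅N, (⊤ : Subgroup G)⁆ ≤ pPow p N ⊔ etaUp p G i}

instance etaUp_normal (p : ℕ) (G : Type*) [Group G] (i : ℕ) : (etaUp p G i).Normal := by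
  cases i with
  | zero => show (⊥ : Subgroup G).Normal; infer_instance
  | succ i => exact normal_sSup fun N hN => hN.1

/-- The powerful class of `G`. -/
noncomputable def pwc (p : ℕ) (G : Type*) [Group G] : ℕ := sInf {k | etaUp p G k = ⊤}

/-- Iterated commutator `[N, G, G, ..., G]` with `i` copies of `G`. -/
def itComm {G : Type*} [Group G] (N : Subgroup G) : ℕ → Subgroup G
  | 0 => N
  | i + 1 => ⁅itComm N i, (⊤ : Subgroup G)⁆

/-- `N` is PF-embedded in `G`: it admits a potent filtration. -/
def PFEmbedded {G : Type*} [Group G] (p : ℕ) (N : Subgroup G) : Prop :=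
  ∃ (s : ℕ) (M : ℕ → Subgroup G), M 0 = N ∧ M s = ⊥ ∧
    (∀ i, M (i + 1) ≤ M i) ∧ (∀ i, (M i).Normal) ∧
    (∀ i, ⁅M i, (⊤ : Subgroup G)⁆ ≤ M (i + 1)) ∧
    (∀ i, itComm (M i) (p - 1) ≤ pPow p (M (i + 1)))

instance instPPowEtaNormal (p : ℕ) (G : Type*) [Group G] : (pPow p (etaUp p G 1)).Normal :=
  pPow_normal p (etaUp_normal p G 1)

/-!
Let `f : G → H` be surjective with kernel inside `η(G)^p`. Images of subgroups satisfying
`[N, G] ≤ N^p η_i(G)` satisfy the same condition in `H`, so `f(η_i(G)) ≤ η_i(H)`. Conversely, the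
preimage `M` of a subgroup satisfying the condition in `H` satisfies it in `G` only up to
`ker f`; but `M η(G)` satisfies it exactly, because `η(G)` is powerfully embedded and
`ker f ≤ η(G)^p ≤ (M η(G))^p`. Hence `f(η_i(G)) = η_i(H)` for all `i`.
-/

open Subgroup

instance pPow.normal {G : Type*} [Group G] (p : ℕ) (N : Subgroup G) [N.Normal] :
    (pPow p N).Normal :=
  pPow_normal p ‹_›

section PPow

variable {G H : Type*} [Group G] [Group H] (p : ℕ)

lemma pPow_mono {N M : Subgroup G} (h : N ≤ M) : pPow p N ≤ pPow p M :=
  closure_mono (Set.image_mono h)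

lemma map_pPow (f : G →* H) (N : Subgroup G) : (pPow p N).map f = pPow p (N.map f) := by
  simp only [pPow, MonoidHom.map_closure, coe_map, Set.image_image, map_pow]

end PPow

lemma commutator_top_le_iff_le_upperCentralSeriesStep {G : Type*} [Group G]
    {N X : Subgroup G} [X.Normal] : ⁅N, ⊤⁆ ≤ X ↔ N ≤ X.upperCentralSeriesStep := by
  rw [commutator_le, SetLike.le_def]
  simp only [mem_top, forall_const, Subgroup.mem_upperCentralSeriesStep]

lemma commutator_sup_top_le {G : Type*} [Group G] {A B X : Subgroup G} [X.Normal]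
    (hA : ⁅A, ⊤⁆ ≤ X) (hB : ⁅B, ⊤⁆ ≤ X) : ⁅A ⊔ B, ⊤⁆ ≤ X := by
  rw [commutator_top_le_iff_le_upperCentralSeriesStep] at *
  exact sup_le hA hB

section EtaUp

variable {G H : Type*} [Group G] [Group H] (p : ℕ)

lemma le_etaUp_succ {N : Subgroup G} [N.Normal] {i : ℕ}
    (h : ⁅N, ⊤⁆ ≤ pPow p N ⊔ etaUp p G i) : N ≤ etaUp p G (i + 1) :=
  le_sSup ⟨‹_›, h⟩

lemma etaUp_succ_le {X : Subgroup G} {i : ℕ}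
    (h : ∀ N : Subgroup G, N.Normal → ⁅N, ⊤⁆ ≤ pPow p N ⊔ etaUp p G i → N ≤ X) :
    etaUp p G (i + 1) ≤ X :=
  sSup_le fun N hN => h N hN.1 hN.2

lemma commutator_etaUp_succ_le (i : ℕ) :
    ⁅etaUp p G (i + 1), ⊤⁆ ≤ pPow p (etaUp p G (i + 1)) ⊔ etaUp p G i := by
  rw [commutator_top_le_iff_le_upperCentralSeriesStep]
  refine etaUp_succ_le p fun N _ hN => ?_
  rw [← commutator_top_le_iff_le_upperCentralSeriesStep]
  exact hN.trans (sup_le_sup_right (pPow_mono p (le_etaUp_succ p hN)) _)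

lemma commutator_etaUp_one_le : ⁅etaUp p G 1, ⊤⁆ ≤ pPow p (etaUp p G 1) := by
  simpa only [etaUp, sup_bot_eq] using commutator_etaUp_succ_le (G := G) p 0

variable {p} {f : G →* H} (hf : Function.Surjective f)
include hf

lemma map_etaUp_le (i : ℕ) : (etaUp p G i).map f ≤ etaUp p H i := by
  induction i with
  | zero => simp only [etaUp, Subgroup.map_bot, le_refl]
  | succ i ih =>
    have : ((etaUp p G (i + 1)).map f).Normal := (etaUp_normal p G (i + 1)).map f hf
    refine le_etaUp_succ p ?_
    calc ⁅(etaUp p G (i + 1)).map f, ⊤⁆ = map f ⁅etaUp p G (i + 1), ⊤⁆ := by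
          rw [map_commutator, map_top_of_surjective f hf]
      _ ≤ (pPow p (etaUp p G (i + 1)) ⊔ etaUp p G i).map f :=
          map_mono (commutator_etaUp_succ_le p i)
      _ ≤ pPow p ((etaUp p G (i + 1)).map f) ⊔ etaUp p H i := by
          rw [Subgroup.map_sup, map_pPow]
          exact sup_le_sup_left ih _

lemma etaUp_le_map (hker : f.ker ≤ pPow p (etaUp p G 1)) (i : ℕ) :
    etaUp p H i ≤ (etaUp p G i).map f := by
  induction i with
  | zero => exact bot_le
  | succ i ih =>
    refine etaUp_succ_le p fun M' hM' hcomm => ?_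
    set M := M'.comap f
    have : M.Normal := hM'.comap f
    have hM : ⁅M, ⊤⁆ ≤ pPow p M ⊔ etaUp p G i ⊔ f.ker :=
      calc ⁅M, ⊤⁆ ≤ comap f ⁅M', ⊤⁆ := by
            rw [← map_le_iff_le_comap, map_commutator, map_comap_eq_self_of_surjective hf,
              map_top_of_surjective f hf]
        _ ≤ (pPow p M' ⊔ etaUp p H i).comap f := comap_mono hcomm
        _ ≤ ((pPow p M ⊔ etaUp p G i).map f).comap f := by
            refine comap_mono ?_
            rw [Subgroup.map_sup, map_pPow, map_comap_eq_self_of_surjective hf]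
            exact sup_le_sup_left ih _
        _ = pPow p M ⊔ etaUp p G i ⊔ f.ker := comap_map_eq f _
    have hL : ⁅M ⊔ etaUp p G 1, ⊤⁆ ≤ pPow p (M ⊔ etaUp p G 1) ⊔ etaUp p G i := by
      have hη : pPow p (etaUp p G 1) ≤ pPow p (M ⊔ etaUp p G 1) ⊔ etaUp p G i :=
        (pPow_mono p le_sup_right).trans le_sup_left
      exact commutator_sup_top_le
        (hM.trans (sup_le (sup_le_sup_right (pPow_mono p le_sup_left) _) (hker.trans hη)))
        ((commutator_etaUp_one_le p).trans hη)
    rw [← map_comap_eq_self_of_surjective hf M']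
    exact map_mono (le_sup_left.trans (le_etaUp_succ p hL))

lemma etaUp_eq_map_of_ker_le (hker : f.ker ≤ pPow p (etaUp p G 1)) (i : ℕ) :
    etaUp p H i = (etaUp p G i).map f :=
  (etaUp_le_map hf hker i).antisymm (map_etaUp_le hf i)

end EtaUp

theorem etaUp_quotient_pPow_general {p : ℕ}
    {G : Type*} [Group G] (i : ℕ) :
    etaUp p (G ⧸ pPow p (etaUp p G 1)) i =
      Subgroup.map (QuotientGroup.mk' (pPow p (etaUp p G 1))) (etaUp p G i) :=
  etaUp_eq_map_of_ker_le (QuotientGroup.mk'_surjective _) (QuotientGroup.ker_mk' _).le i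

/-- for all `i ≥ 1`, `η_i(G/η(G)^p) = η_i(G)/η(G)^p`. -/
theorem etaUp_quotient_pPow {p : ℕ} (hp : p.Prime) (hodd : Odd p)
    {G : Type*} [Group G] [Finite G] (hG : IsPGroup p G) (i : ℕ) (hi : 1 ≤ i) :
    etaUp p (G ⧸ pPow p (etaUp p G 1)) i =
      Subgroup.map (QuotientGroup.mk' (pPow p (etaUp p G 1))) (etaUp p G i) :=
  etaUp_quotient_pPow_general i
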